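/- Let β be a maximal monotone graph in ℝ×ℝ with 0 ∈ β(0) and closure of domain [-1,1], and let β^ε be its Yosida approximation. Then there exist constants c₁ > 0 and c₂ ≥ 0, independent of ε ∈ (0,1), such that c₁ |β^ε(r)| ≤ β^ε(r)·r + c₂ for all r ∈ ℝ and all ε ∈ (0,1). -/
import Mathlib


open Set

/-- for a maximal monotone graph β in ℝ×ℝ with 0 ∈ β(0) and closure of domain
[-1,1], the Yosida approximations β^ε satisfy c₁|β^ε(r)| ≤ β^ε(r)·r + c₂ uniformly in
ε ∈ (0,1), for some constants c₁ > 0, c₂ ≥ 0. -/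
theorem statement3
    (β : ℝ → Set ℝ) (βε : ℝ → ℝ → ℝ)
    -- β is a monotone graph
    (hmono : ∀ r₁ r₂ ξ₁ ξ₂ : ℝ, ξ₁ ∈ β r₁ → ξ₂ ∈ β r₂ → 0 ≤ (ξ₂ - ξ₁) * (r₂ - r₁))
    -- maximality
    (hmax : ∀ r ξ : ℝ, (∀ r' ξ' : ℝ, ξ' ∈ β r' → 0 ≤ (ξ - ξ') * (r - r')) → ξ ∈ β r)
    (h0 : (0 : ℝ) ∈ β 0)
    (hdom : closure {r : ℝ | (β r).Nonempty} = Icc (-1 : ℝ) 1)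
    -- β^ε is the Yosida approximation: β^ε(r) = (r - J_ε r)/ε with J_ε r = r - ε β^ε(r)
    -- the resolvent relation β^ε(r) ∈ β(r - ε β^ε(r))
    (hYosida : ∀ ε ∈ Ioo (0 : ℝ) 1, ∀ r : ℝ, βε ε r ∈ β (r - ε * βε ε r))
    -- β^ε monotone and Lipschitz with β^ε(0) = 0
    (hβεmono : ∀ ε ∈ Ioo (0 : ℝ) 1, Monotone (βε ε))
    (hβεlip : ∀ ε ∈ Ioo (0 : ℝ) 1, LipschitzWith (Real.toNNReal (1 / ε)) (βε ε))
    (hβε0 : ∀ ε ∈ Ioo (0 : ℝ) 1, βε ε 0 = 0) :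
    ∃ c₁ : ℝ, 0 < c₁ ∧ ∃ c₂ : ℝ, 0 ≤ c₂ ∧
      ∀ ε ∈ Ioo (0 : ℝ) 1, ∀ r : ℝ, c₁ * |βε ε r| ≤ βε ε r * r + c₂ := by
  -- pick points of the domain near 1/2 and -1/2
  have hhalf : (1/2 : ℝ) ∈ closure {r : ℝ | (β r).Nonempty} := by
    rw [hdom]; constructor <;> norm_num
  have hnhalf : (-(1/2) : ℝ) ∈ closure {r : ℝ | (β r).Nonempty} := by
    rw [hdom]; constructor <;> norm_num
  obtain ⟨xp, hxpI, hxpD⟩ :=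
    (mem_closure_iff).mp hhalf (Ioo (1/4 : ℝ) (3/4)) isOpen_Ioo (by norm_num)
  obtain ⟨xm, hxmI, hxmD⟩ :=
    (mem_closure_iff).mp hnhalf (Ioo (-(3/4) : ℝ) (-(1/4))) isOpen_Ioo (by norm_num)
  obtain ⟨ξp, hξp⟩ := hxpD
  obtain ⟨ξm, hξm⟩ := hxmD
  refine ⟨1/4, by norm_num, 2 * (|ξp| + |ξm|), by positivity, ?_⟩
  intro ε hε r
  set b := βε ε r with hbdef
  set J := r - ε * b with hJdef
  have hb : b ∈ β J := hYosida ε hε r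
  have hJmem : J ∈ Icc (-1 : ℝ) 1 := by
    rw [← hdom]; exact subset_closure ⟨b, hb⟩
  have hJ1 : -1 ≤ J := hJmem.1
  have hJ2 : J ≤ 1 := hJmem.2
  have hε0 : 0 < ε := hε.1
  have hr : r = J + ε * b := by rw [hJdef]; ring
  rcases le_or_gt 0 b with hb0 | hb0
  · have hm := hmono xp J ξp b hξp hb
    have h1 : -|ξp| ≤ ξp := neg_abs_le ξp
    have h2 : ξp ≤ |ξp| := le_abs_self ξp
    rw [abs_of_nonneg hb0, hr]
    nlinarith [hxpI.1, hxpI.2, sq_nonneg b, mul_nonneg hε0.le (sq_nonneg b),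
      abs_nonneg ξm, abs_nonneg ξp]
  · have hm := hmono xm J ξm b hξm hb
    have h1 : -|ξm| ≤ ξm := neg_abs_le ξm
    have h2 : ξm ≤ |ξm| := le_abs_self ξm
    rw [abs_of_neg hb0, hr]
    nlinarith [hxmI.1, hxmI.2, sq_nonneg b, mul_nonneg hε0.le (sq_nonneg b),
      abs_nonneg ξm, abs_nonneg ξp]
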